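/- With V, G, r, v1, v2, the edge deletion G' and the contraction G'' as defined in the context: (a) a function c : V → Fin r is a proper r-coloring of G if and only if it is a proper r-coloring of G' with c v1 ≠ c v2; (b) restriction along the inclusion {v : V // v ≠ v2} → V gives a bijection from the set of proper r-colorings c of G' with c v1 = c v2 onto the set of proper r-colorings of the contraction G''. -/

import Mathlib

/-- The contraction `G''` of the graph `G` along the edge `{v1, v2}`:
a simple graph on the subtype `{v : V // v ≠ v2}` in which `a` and `b` are adjacent iff
`G'.Adj a b`, or (`a = v1` and `G'.Adj v2 b`), or (`b = v1` and `G'.Adj a v2`), where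
`G'` is `G` with the edge `{v1, v2}` deleted. -/
def contractGraph {V : Type*} (G : SimpleGraph V) (v1 v2 : V) :
    SimpleGraph {v : V // v ≠ v2} where
  Adj a b :=
    (G.deleteEdges {s(v1, v2)}).Adj (a : V) (b : V) ∨
      ((a : V) = v1 ∧ (G.deleteEdges {s(v1, v2)}).Adj v2 (b : V)) ∨
      ((b : V) = v1 ∧ (G.deleteEdges {s(v1, v2)}).Adj (a : V) v2)
  symm := by
    refine ⟨?_⟩
    intro a b h
    rcases h with h | ⟨ha, h⟩ | ⟨hb, h⟩
    · exact Or.inl h.symm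
    · exact Or.inr (Or.inr ⟨ha, h.symm⟩)
    · exact Or.inr (Or.inl ⟨hb, h.symm⟩)
  loopless := by
    refine ⟨?_⟩
    intro a h
    rcases h with h | ⟨ha, h⟩ | ⟨ha, h⟩
    · exact (G.deleteEdges {s(v1, v2)}).irrefl h
    · rw [SimpleGraph.deleteEdges_adj] at h
      exact h.2 (by rw [ha]; exact Set.mem_singleton_iff.mpr Sym2.eq_swap)
    · rw [SimpleGraph.deleteEdges_adj] at h
      exact h.2 (by rw [ha]; exact Set.mem_singleton_iff.mpr rfl)

/-- The two identifications of coloring sets from the proof of Lemma 7.3: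
(a) a function `c : V → Fin r` is a proper `r`-coloring of `G` iff it is a proper
`r`-coloring of the deletion `G'` with `c v1 ≠ c v2`;
(b) restriction along the inclusion `{v : V // v ≠ v2} → V` is a bijection from the set
of proper `r`-colorings `c` of `G'` with `c v1 = c v2` onto the set of proper
`r`-colorings of the contraction `G''`. -/
theorem stmt4 {V : Type*} [Fintype V] [DecidableEq V] (G : SimpleGraph V)
    (r : ℕ) (hr : 1 ≤ r) (v1 v2 : V) (hne : v1 ≠ v2) (hadj : G.Adj v1 v2) :
    (∀ c : V → Fin r,
      (∀ a b : V, G.Adj a b → c a ≠ c b) ↔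
        ((∀ a b : V, (G.deleteEdges {s(v1, v2)}).Adj a b → c a ≠ c b) ∧ c v1 ≠ c v2)) ∧
    Set.BijOn (fun (c : V → Fin r) (v : {v : V // v ≠ v2}) => c (v : V))
      {c : V → Fin r |
        (∀ a b : V, (G.deleteEdges {s(v1, v2)}).Adj a b → c a ≠ c b) ∧ c v1 = c v2}
      {c' : {v : V // v ≠ v2} → Fin r |
        ∀ a b : {v : V // v ≠ v2}, (contractGraph G v1 v2).Adj a b → c' a ≠ c' b} := by
  constructor
  · intro c
    constructor
    · intro h
      refine ⟨fun a b hab => h a b (SimpleGraph.deleteEdges_adj.mp hab).1,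
        h v1 v2 hadj⟩
    · rintro ⟨h, h12⟩ a b hab
      by_cases he : s(a, b) = s(v1, v2)
      · rcases Sym2.eq_iff.mp he with ⟨ha, hb⟩ | ⟨ha, hb⟩
        · subst ha; subst hb; exact h12
        · subst ha; subst hb; exact h12.symm
      · exact h a b (SimpleGraph.deleteEdges_adj.mpr ⟨hab, by simpa using he⟩)
  · refine ⟨?_, ?_, ?_⟩
    · rintro c ⟨hc, h12⟩ a b hab
      rcases hab with h | ⟨ha, h⟩ | ⟨hb, h⟩
      · exact hc _ _ h
      · simp only [ha]
        rw [show c v1 = c v2 from h12]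
        exact hc _ _ h
      · simp only [hb]
        rw [show c v1 = c v2 from h12]
        intro heq
        exact hc _ _ h heq
    · rintro c ⟨hc, hc12⟩ d ⟨hd, hd12⟩ heq
      funext v
      by_cases hv : v = v2
      · subst hv
        rw [← hc12, ← hd12]
        exact congrFun heq ⟨v1, hne⟩
      · exact congrFun heq ⟨v, hv⟩
    · rintro c' hc'
      refine ⟨fun v => if h : v = v2 then c' ⟨v1, hne⟩ else c' ⟨v, h⟩, ⟨?_, ?_⟩, ?_⟩
      · intro a b hab
        have hab' := hab
        rw [SimpleGraph.deleteEdges_adj] at hab'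
        by_cases ha : a = v2 <;> by_cases hb : b = v2
        · subst ha; subst hb; exact absurd hab'.1 G.irrefl
        · subst ha
          simp only [dif_pos rfl, dif_neg hb]
          exact hc' ⟨v1, hne⟩ ⟨b, hb⟩ (Or.inr (Or.inl ⟨rfl, hab⟩))
        · subst hb
          simp only [dif_pos rfl, dif_neg ha]
          exact hc' ⟨a, ha⟩ ⟨v1, hne⟩ (Or.inr (Or.inr ⟨rfl, hab⟩))
        · simp only [dif_neg ha, dif_neg hb]
          exact hc' ⟨a, ha⟩ ⟨b, hb⟩ (Or.inl hab)
      · simp [hne]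
      · funext v
        simp [v.2]
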